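/- arXiv:1810.07586 — 4 statements merged into one kernel-verified Lean document; each statement's English description precedes it below -/
import Mathlib

section
/- Let n ≥ 2, let V be a finite set with n elements, let G be a simple graph on V that is a tree, let ℓ be a bijection from {1, …, n-1} to the edge set of G, and let v₀ ∈ V. Then there exists a unique bijection f : V → {1, …, n} with f(v₀) = 1 such that the tuple (σ_1, …, σ_{n-1}) is a minimal factorization of size n, where for each k the permutation σ_k is the transposition of {1, …, n} exchanging f(a) and f(b), with {a, b} being the edge ℓ(k) of G. -/
/-!
Multiplying a permutation by the transposition of two points lying in different cycles merges
those two cycles. Adding the edges of a forest one at a time always joins two different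
components, so by induction the cycles of the product of its edge transpositions are exactly
its connected components. For the tree `G`, the product `P` of the transpositions of the edges
in the order given by `ℓ` is therefore a single cycle through all of `V`. Relabelling the
vertices by `f` conjugates every factor, so the condition on `f` says `f P f⁻¹ = (1 2 ⋯ n)`,
i.e. `f (P^k v₀) = f v₀ + k`; with `f v₀ = 1` this determines `f`, and it is a bijection because
`P` has order `n`.
-/

open Equiv Equiv.Perm SimpleGraph

/-- `F` is a minimal factorization of size `n`: each entry is a transposition of
`{1,…,n}` (modelled as `Fin n`, element `i` ↔ index `i-1`) and the left-to-right
product `τ₁ τ₂ ⋯ τ_{n-1}` (apply `τ₁` first) equals the cycle `(1,2,…,n)`,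
represented by `finRotate n`. -/
def IsMinFact (n : ℕ) (F : Fin (n - 1) → Equiv.Perm (Fin n)) : Prop :=
  (∀ k, (F k).IsSwap) ∧ (List.ofFn F).reverse.prod = finRotate n

namespace Equiv.Perm

variable {α : Type*} [DecidableEq α] {c : Perm α} {a b x y : α}

theorem pow_swap_mul_apply_of_forall_ne {j : ℕ}
    (h : ∀ i < j, (c ^ (i + 1)) x ≠ a ∧ (c ^ (i + 1)) x ≠ b) :
    ((swap a b * c) ^ j) x = (c ^ j) x := by
  induction j with
  | zero => rfl
  | succ j ih =>
    rw [pow_succ', mul_apply, ih fun i hi => h i (by omega), mul_apply, ← mul_apply c,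
      ← pow_succ', swap_apply_of_ne_of_ne (h j j.lt_succ_self).1 (h j j.lt_succ_self).2]

theorem sameCycle_swap_mul_of_sameCycle_left [Finite α] (hab : ¬c.SameCycle a b)
    (hxa : c.SameCycle x a) : (swap a b * c).SameCycle x b := by
  -- Until the `c`-orbit of `x` first reaches `a`, `swap a b * c` moves `x` as `c` does; the
  -- step on which `c` would reach `a` reaches `b` instead.
  have hex : ∃ k, (c ^ (k + 1)) x = a := by
    obtain ⟨k, hk, -, hka⟩ := hxa.exists_pow_eq''
    exact ⟨k - 1, by rwa [Nat.sub_add_cancel hk]⟩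
  classical
  have hne : ∀ i < Nat.find hex, (c ^ (i + 1)) x ≠ a ∧ (c ^ (i + 1)) x ≠ b := fun i hi =>
    ⟨Nat.find_min hex hi, fun hb => hab (hxa.symm.trans (hb ▸ SameCycle.rfl.pow_left.symm))⟩
  refine ⟨((Nat.find hex + 1 : ℕ) : ℤ), ?_⟩
  rw [zpow_natCast, pow_succ', mul_apply, pow_swap_mul_apply_of_forall_ne hne, mul_apply,
    ← mul_apply c, ← pow_succ', Nat.find_spec hex, swap_apply_left]

theorem SameCycle.swap_mul [Finite α] (hab : ¬c.SameCycle a b) (hxy : c.SameCycle x y) :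
    (swap a b * c).SameCycle x y := by
  by_cases hxa : c.SameCycle x a
  · exact (sameCycle_swap_mul_of_sameCycle_left hab hxa).trans
      (sameCycle_swap_mul_of_sameCycle_left hab (hxy.symm.trans hxa)).symm
  by_cases hxb : c.SameCycle x b
  · have hba : ¬c.SameCycle b a := fun h => hab h.symm
    rw [swap_comm]
    exact (sameCycle_swap_mul_of_sameCycle_left hba hxb).trans
      (sameCycle_swap_mul_of_sameCycle_left hba (hxy.symm.trans hxb)).symm
  obtain ⟨k, rfl⟩ := hxy.exists_nat_pow_eq
  refine ⟨k, ?_⟩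
  rw [zpow_natCast, pow_swap_mul_apply_of_forall_ne fun i _ => ⟨?_, ?_⟩] <;> rintro h
  · exact hxa (h ▸ SameCycle.rfl.pow_left.symm)
  · exact hxb (h ▸ SameCycle.rfl.pow_left.symm)

theorem sameCycle_swap_mul_of_not_sameCycle [Finite α] (hab : ¬c.SameCycle a b) :
    (swap a b * c).SameCycle a b :=
  sameCycle_swap_mul_of_sameCycle_left hab SameCycle.rfl

end Equiv.Perm

lemma Equiv.Perm.SameCycle.reachable {V : Type*} {G : SimpleGraph V} {σ : Perm V}
    (hσ : ∀ x, G.Reachable x (σ x)) {x y : V} (h : σ.SameCycle x y) : G.Reachable x y := by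
  obtain ⟨k, rfl⟩ := h
  induction k using Int.induction_on with
  | zero => rfl
  | succ k ih => rw [add_comm, zpow_one_add, mul_apply]; exact ih.trans (hσ _)
  | pred k ih =>
    have hinv := (hσ (σ⁻¹ ((σ ^ (-(k : ℤ))) x))).symm
    rw [← mul_apply, mul_inv_cancel, one_apply] at hinv
    rw [sub_eq_neg_add, zpow_add, zpow_neg_one, mul_apply]
    exact ih.trans hinv

lemma SimpleGraph.fromEdgeSet_setOf_mem_cons {V : Type*} (a b : V) (L : List (Sym2 V)) :
    fromEdgeSet {e | e ∈ s(a, b) :: L} = fromEdgeSet {e | e ∈ L} ⊔ edge a b := by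
  rw [edge, ← fromEdgeSet_union]
  congr 1
  ext e
  simp [or_comm]

section EdgeSwap

variable {V : Type*} [DecidableEq V]

def edgeSwap : Sym2 V → Perm V := Sym2.lift ⟨fun a b => swap a b, fun a b => swap_comm a b⟩

@[simp] lemma edgeSwap_mk (a b : V) : edgeSwap s(a, b) = swap a b := rfl

lemma SimpleGraph.reachable_edge_swap_apply (a b z : V) :
    (edge a b).Reachable z (swap a b z) := by
  rcases eq_or_ne a b with rfl | hab
  · rw [swap_self]; rfl
  rw [swap_apply_def]
  split_ifs with hza hzb
  · subst hza
    exact ((edge_adj _ _ _ _).2 ⟨Or.inl ⟨rfl, rfl⟩, hab⟩).reachable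
  · subst hzb
    exact ((edge_adj _ _ _ _).2 ⟨Or.inr ⟨rfl, rfl⟩, hab.symm⟩).reachable
  · rfl

lemma reachable_prod_edgeSwap_apply (L : List (Sym2 V)) (x : V) :
    (fromEdgeSet {e | e ∈ L}).Reachable x ((L.map edgeSwap).prod x) := by
  induction L with
  | nil => rfl
  | cons e L ih =>
    induction e using Sym2.ind with
    | _ a b =>
    rw [fromEdgeSet_setOf_mem_cons, List.map_cons, List.prod_cons, edgeSwap_mk, mul_apply]
    exact (ih.mono le_sup_left).trans ((reachable_edge_swap_apply a b _).mono le_sup_right)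

lemma SimpleGraph.Reachable.sameCycle_swap_mul [Finite V] {H : SimpleGraph V} {c : Perm V}
    {a b x y : V} (hc : ∀ {u v}, H.Reachable u v → c.SameCycle u v) (hab : ¬c.SameCycle a b)
    (h : (H ⊔ edge a b).Reachable x y) : (swap a b * c).SameCycle x y := by
  rw [reachable_iff_reflTransGen] at h
  induction h with
  | refl => exact SameCycle.rfl
  | tail _ hzw ih =>
    refine ih.trans ?_
    rcases (sup_adj _ _ _ _).1 hzw with hzw | hzw
    · exact (hc hzw.reachable).swap_mul hab
    · rcases (edge_adj _ _ _ _).1 hzw with ⟨⟨rfl, rfl⟩ | ⟨rfl, rfl⟩, -⟩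
      · exact sameCycle_swap_mul_of_not_sameCycle hab
      · exact (sameCycle_swap_mul_of_not_sameCycle hab).symm

theorem sameCycle_prod_edgeSwap_iff_reachable [Finite V] {L : List (Sym2 V)} (hL : L.Nodup)
    (hacyc : (fromEdgeSet {e | e ∈ L}).IsAcyclic) {x y : V} :
    (L.map edgeSwap).prod.SameCycle x y ↔ (fromEdgeSet {e | e ∈ L}).Reachable x y := by
  refine ⟨SameCycle.reachable (reachable_prod_edgeSwap_apply L), fun h => ?_⟩
  induction L generalizing x y with
  | nil => simpa using h
  | cons e L ih =>
    induction e using Sym2.ind with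
    | _ a b =>
    rw [fromEdgeSet_setOf_mem_cons] at hacyc h
    rw [List.map_cons, List.prod_cons, edgeSwap_mk]
    obtain ⟨hacyc', hab⟩ := isAcyclic_sup_fromEdgeSet_iff.1 hacyc
    have ih' := @ih (List.nodup_cons.1 hL).2 hacyc'
    rcases eq_or_ne a b with rfl | hne
    · rw [sup_edge_self] at h
      simpa only [swap_self, ← Perm.one_def, one_mul] using ih' h
    -- By `hL`, `s(a, b)` is not an edge of the smaller forest.
    have hnr : ¬(fromEdgeSet {e | e ∈ L}).Reachable a b := fun hr =>
      (hab hr).elim hne fun hadj => (List.nodup_cons.1 hL).1 ((fromEdgeSet_adj _).1 hadj).1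
    exact h.sameCycle_swap_mul ih'
      fun hc => hnr (SameCycle.reachable (reachable_prod_edgeSwap_apply L) hc)

end EdgeSwap

theorem Equiv.permCongr_eq_iff_semiconj {α β : Type*} (e : α ≃ β) (σ : Perm α) (τ : Perm β) :
    e.permCongr σ = τ ↔ Function.Semiconj e σ τ := by
  rw [Equiv.ext_iff, ← e.forall_congr_right]
  simp [Function.Semiconj]

theorem Function.Semiconj.eq_of_isCycleOn_univ {α β : Type*} [Finite α] {σ : Perm α}
    {τ : Perm β} (hσ : σ.IsCycleOn Set.univ) {f g : α ≃ β} (hf : Function.Semiconj f σ τ)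
    (hg : Function.Semiconj g σ τ) {a : α} (ha : f a = g a) : f = g := by
  ext x
  obtain ⟨k, rfl⟩ := hσ.exists_pow_eq' Set.finite_univ (Set.mem_univ a) (Set.mem_univ x)
  rw [coe_pow, (hf.iterate_right k).eq, (hg.iterate_right k).eq, ha]

theorem existsUnique_semiconj_finRotate {α : Type*} [Fintype α] {m : ℕ}
    (hcard : Fintype.card α = m + 1) {σ : Perm α} (hσ : σ.IsCycleOn Set.univ) (a : α) :
    ∃! f : α ≃ Fin (m + 1), f a = 0 ∧ Function.Semiconj f σ (finRotate (m + 1)) := by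
  have horbit : ∀ i j : ℕ, (σ ^ i) a = (σ ^ j) a ↔ i ≡ j [MOD m + 1] := fun i j => by
    rw [← Finset.coe_univ] at hσ
    rw [hσ.pow_apply_eq_pow_apply (Finset.mem_univ a), Finset.card_univ, hcard]
  let g : Fin (m + 1) → α := fun k => (σ ^ (k : ℕ)) a
  have hg : g.Bijective := by
    rw [Fintype.bijective_iff_injective_and_card]
    exact ⟨fun i j hij => Fin.ext (Nat.ModEq.eq_of_lt_of_lt ((horbit i j).1 hij) i.2 j.2),
      by simp [hcard]⟩
  have hgσ : ∀ k, g (finRotate (m + 1) k) = σ (g k) := fun k => by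
    rw [← mul_apply, ← pow_succ', horbit, finRotate_apply, Fin.val_add]
    exact (Nat.mod_modEq _ _).trans (Nat.ModEq.add_left _ (Nat.mod_modEq _ _))
  let f := (Equiv.ofBijective g hg).symm
  have hfa : f a = 0 := (Equiv.symm_apply_eq _).2 (by simp [g])
  have hf : Function.Semiconj f σ (finRotate (m + 1)) := fun x => by
    obtain ⟨k, rfl⟩ := hg.2 x
    simp only [f, Equiv.symm_apply_eq, Equiv.ofBijective_apply, hgσ,
      Equiv.ofBijective_symm_apply_apply]
  exact ⟨f, ⟨hfa, hf⟩, fun f' hf' => hf'.2.eq_of_isCycleOn_univ hσ hf (hf'.1.trans hfa.symm)⟩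

theorem lift_swap_eq_permCongr_edgeSwap {α β : Type*} [DecidableEq α] [DecidableEq β]
    (f : α ≃ β) (e : Sym2 α) :
    Sym2.lift ⟨fun a b => swap (f a) (f b), fun _ _ => swap_comm _ _⟩ e =
      f.permCongr (edgeSwap e) := by
  induction e using Sym2.ind with
  | _ a b => simp [Equiv.permCongr_def]

theorem isMinFact_lift_swap_iff_semiconj {n : ℕ} {V : Type*} [DecidableEq V]
    {E : Fin (n - 1) → Sym2 V} (hE : ∀ k, ¬(E k).IsDiag) (f : V ≃ Fin n) :
    IsMinFact n (fun k => Sym2.lift ⟨fun a b => swap (f a) (f b), fun _ _ => swap_comm _ _⟩ (E k))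
      ↔ Function.Semiconj f (((List.ofFn E).reverse.map edgeSwap).prod) (finRotate n) := by
  have hswap : ∀ k, (Sym2.lift ⟨fun a b => swap (f a) (f b), fun _ _ => swap_comm _ _⟩
      (E k)).IsSwap := fun k => by
    induction h : E k using Sym2.ind with
    | _ a b =>
      have hab : a ≠ b := by simpa [h] using hE k
      exact ⟨f a, f b, f.injective.ne hab, rfl⟩
  rw [IsMinFact, and_iff_right hswap, ← Equiv.permCongr_eq_iff_semiconj]
  simp only [lift_swap_eq_permCongr_edgeSwap, ← f.permCongrHom_coe, map_list_prod,
    List.map_reverse, List.map_ofFn]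
  rfl

/-- given a tree `G` on an `n`-element vertex set `V`, a bijective
labelling `ℓ` of its edges by `{1,…,n-1}` and a distinguished vertex `v₀`, there is
a unique bijection `f : V → {1,…,n}` with `f v₀ = 1` such that the sequence of
transpositions `σ_k = (f a, f b)`, where `{a,b}` is the edge with label `k`, is a
minimal factorization of size `n`. -/
theorem unique_vertex_labelling (n : ℕ) (hn : 2 ≤ n) (V : Type*) [Fintype V]
    [DecidableEq V] (hV : Fintype.card V = n) (G : SimpleGraph V) (hG : G.IsTree)
    (ℓ : Fin (n - 1) ≃ G.edgeSet) (v₀ : V) :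
    ∃! f : V ≃ Fin n, f v₀ = ⟨0, by omega⟩ ∧
      IsMinFact n (fun k =>
        Sym2.lift ⟨fun a b => Equiv.swap (f a) (f b), fun a b => Equiv.swap_comm _ _⟩
          ((ℓ k : Sym2 V))) := by
  obtain ⟨m, rfl⟩ : ∃ m, n = m + 2 := ⟨n - 2, by omega⟩
  set L := (List.ofFn fun k => (ℓ k : Sym2 V)).reverse
  have hLG : fromEdgeSet {e | e ∈ L} = G := by
    convert fromEdgeSet_edgeSet G
    ext e
    simp only [L, List.mem_reverse, List.mem_ofFn']
    exact ⟨by rintro ⟨k, rfl⟩; exact (ℓ k).2, fun he => ⟨ℓ.symm ⟨e, he⟩, by simp⟩⟩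
  have hL : L.Nodup :=
    List.nodup_reverse.2 (List.nodup_ofFn_ofInjective (Subtype.val_injective.comp ℓ.injective))
  have hP : (L.map edgeSwap).prod.IsCycleOn Set.univ := by
    refine ⟨Set.bijOn_univ.2 (Equiv.bijective _), fun x _ y _ => ?_⟩
    rw [sameCycle_prod_edgeSwap_iff_reachable hL (hLG ▸ hG.isAcyclic), hLG]
    exact hG.connected.preconnected x y
  simp only [isMinFact_lift_swap_iff_semiconj fun k => G.not_isDiag_of_mem_edgeSet (ℓ k).2]
  exact existsUnique_semiconj_finRotate hV hP v₀
end

section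
/- Fix n ≥ 2 and 1 ≤ k ≤ n-1. For every tuple (a_1, b_1, …, a_k, b_k) of natural numbers, the number of minimal factorizations F ∈ 𝔐_n with T_j(F) = a_j and M_j(F) = b_j for all 1 ≤ j ≤ k equals the number of minimal factorizations F ∈ 𝔐_n with M_{j-1}(F) = a_j and T_j(F) = b_j for all 1 ≤ j ≤ k, where by convention M_0(F) means M_n(F). -/
/-- `T(F, x)`: the number of transpositions in `F` moving the element represented by `x`. -/
def Tcount {n : ℕ} (F : Fin (n - 1) → Equiv.Perm (Fin n)) (x : Fin n) : ℕ :=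
  (Finset.univ.filter fun k : Fin (n - 1) => F k x ≠ x).card

/-- `M(F, x)`: the number of indices `1 ≤ k ≤ n-1` with `τ₁⋯τ_{k-1}(x) ≠ τ₁⋯τ_k(x)`,
i.e. the number of transpositions affecting the trajectory of `x` (left-to-right
partial products, so `τ₁⋯τ_k` is the product of the first `k` entries, applied
`τ₁` first). -/
def Mcount {n : ℕ} (F : Fin (n - 1) → Equiv.Perm (Fin n)) (x : Fin n) : ℕ :=
  (Finset.univ.filter fun k : Fin (n - 1) =>
    ((List.ofFn F).take k.val).reverse.prod x ≠
      ((List.ofFn F).take (k.val + 1)).reverse.prod x).card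

namespace SymTM

variable {n : ℕ}

def pp (F : Fin (n - 1) → Equiv.Perm (Fin n)) (m : ℕ) : Equiv.Perm (Fin n) :=
  ((List.ofFn F).take m).reverse.prod

lemma pp_zero (F : Fin (n - 1) → Equiv.Perm (Fin n)) : pp F 0 = 1 := rfl

lemma pp_succ (F : Fin (n - 1) → Equiv.Perm (Fin n)) {m : ℕ} (hm : m < n - 1) :
    pp F (m + 1) = F ⟨m, hm⟩ * pp F m := by
  unfold pp
  rw [List.take_succ]
  have h : (List.ofFn F)[m]? = some (F ⟨m, hm⟩) := by
    rw [List.getElem?_ofFn]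
    simp [List.ofFnNthVal, hm]
  rw [h]
  simp

lemma pp_top (F : Fin (n - 1) → Equiv.Perm (Fin n)) :
    pp F (n - 1) = (List.ofFn F).reverse.prod := by
  unfold pp
  rw [List.take_of_length_le (by simp)]

lemma pp_pred (F : Fin (n - 1) → Equiv.Perm (Fin n)) {m : ℕ} (hm : m + 1 ≤ n - 1) :
    pp F (n - 1 - m) = F ⟨n - 1 - (m + 1), by omega⟩ * pp F (n - 1 - (m + 1)) := by
  have h2 : n - 1 - m = (n - 1 - (m + 1)) + 1 := by omega
  rw [h2, pp_succ F (show n - 1 - (m + 1) < n - 1 by omega)]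

lemma rev_mk {m : ℕ} (hm' : m < n - 1) :
    (Fin.rev (⟨m, hm'⟩ : Fin (n - 1))) = ⟨n - 1 - (m + 1), by omega⟩ := by
  ext; simp [Fin.val_rev]

/-- The bijection Φ. -/
def Phi (F : Fin (n - 1) → Equiv.Perm (Fin n)) : Fin (n - 1) → Equiv.Perm (Fin n) :=
  fun k => (pp F k.rev.val)⁻¹ * F k.rev * pp F k.rev.val

/-- The inverse bijection Ψ. -/
def Psi (G : Fin (n - 1) → Equiv.Perm (Fin n)) : Fin (n - 1) → Equiv.Perm (Fin n) :=
  fun j => (pp G (n - 1) * (pp G (n - 1 - j.val))⁻¹) * G j.rev *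
    (pp G (n - 1 - j.val) * (pp G (n - 1))⁻¹)

lemma val_rev (k : Fin (n - 1)) : k.rev.val = n - 1 - (k.val + 1) := Fin.val_rev k

lemma pp_Phi (F : Fin (n - 1) → Equiv.Perm (Fin n)) :
    ∀ m, m ≤ n - 1 → pp (Phi F) m = (pp F (n - 1 - m))⁻¹ * pp F (n - 1) := by
  intro m
  induction m with
  | zero => intro _; simp [pp_zero]
  | succ m ih =>
    intro hm
    have hm' : m < n - 1 := by omega
    rw [pp_succ (Phi F) hm', ih (le_of_lt hm')]
    simp only [Phi]
    rw [rev_mk hm', pp_pred F hm]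
    group

lemma pp_Psi (G : Fin (n - 1) → Equiv.Perm (Fin n)) :
    ∀ m, m ≤ n - 1 → pp (Psi G) m = pp G (n - 1) * (pp G (n - 1 - m))⁻¹ := by
  intro m
  induction m with
  | zero => intro _; simp [pp_zero]
  | succ m ih =>
    intro hm
    have hm' : m < n - 1 := by omega
    rw [pp_succ (Psi G) hm', ih (le_of_lt hm')]
    simp only [Psi]
    rw [rev_mk hm', pp_pred G hm]
    group

lemma Psi_Phi (F : Fin (n - 1) → Equiv.Perm (Fin n)) : Psi (Phi F) = F := by
  funext j
  unfold Psi
  rw [pp_Phi F (n - 1) le_rfl, pp_Phi F (n - 1 - j.val) (by omega)]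
  have h0 : n - 1 - (n - 1) = 0 := by omega
  have h1 : n - 1 - (n - 1 - j.val) = j.val := by omega
  rw [h0, h1, pp_zero]
  simp only [Phi]
  rw [Fin.rev_rev]
  group

lemma Phi_Psi (G : Fin (n - 1) → Equiv.Perm (Fin n)) : Phi (Psi G) = G := by
  funext k
  unfold Phi
  rw [pp_Psi G k.rev.val (by omega)]
  have h1 : n - 1 - k.rev.val = k.val + 1 := by
    have := val_rev k; have := k.isLt; omega
  rw [h1]
  simp only [Psi]
  rw [Fin.rev_rev, h1]
  group



lemma isSwap_conj (p g : Equiv.Perm (Fin n)) (h : g.IsSwap) : (p * g * p⁻¹).IsSwap := by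
  obtain ⟨x, y, hxy, rfl⟩ := h
  exact ⟨p x, p y, fun hc => hxy (p.injective hc), (Equiv.swap_apply_apply p x y).symm⟩

lemma isSwap_conj' (p g : Equiv.Perm (Fin n)) (h : g.IsSwap) : (p⁻¹ * g * p).IsSwap := by
  simpa using isSwap_conj p⁻¹ g h

lemma card_filter_rev {N : ℕ} (p : Fin N → Prop) [DecidablePred p] :
    (Finset.univ.filter fun k : Fin N => p k.rev).card = (Finset.univ.filter p).card := by
  apply Finset.card_equiv (Fin.revPerm)
  intro k
  simp

lemma Mcount_eq (H : Fin (n - 1) → Equiv.Perm (Fin n)) (x : Fin n) :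
    Mcount H x =
      (Finset.univ.filter fun k : Fin (n - 1) => pp H k.val x ≠ pp H (k.val + 1) x).card := rfl

lemma Tcount_Phi (F : Fin (n - 1) → Equiv.Perm (Fin n)) (x : Fin n) :
    Tcount (Phi F) x = Mcount F x := by
  rw [Mcount_eq, ← card_filter_rev (fun j : Fin (n - 1) => pp F j.val x ≠ pp F (j.val + 1) x)]
  unfold Tcount
  congr 1
  apply Finset.filter_congr
  intro k _
  rw [pp_succ F k.rev.isLt]
  simp only [Fin.eta, Phi, Equiv.Perm.mul_apply, ne_eq, Equiv.Perm.inv_eq_iff_eq]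
  exact not_congr eq_comm

lemma Mcount_Phi (F : Fin (n - 1) → Equiv.Perm (Fin n)) (x : Fin n) :
    Mcount (Phi F) x = Tcount F ((List.ofFn F).reverse.prod x) := by
  rw [Mcount_eq]
  unfold Tcount
  rw [← card_filter_rev (fun j : Fin (n - 1) =>
    F j ((List.ofFn F).reverse.prod x) ≠ (List.ofFn F).reverse.prod x)]
  congr 1
  apply Finset.filter_congr
  intro k _
  rw [← pp_top F, pp_Phi F k.val (le_of_lt k.isLt), pp_Phi F (k.val + 1) k.isLt,
    pp_pred F (Nat.succ_le_of_lt k.isLt)]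
  have hrk : (⟨n - 1 - (k.val + 1), by omega⟩ : Fin (n - 1)) = k.rev := by
    ext; simp [Fin.val_rev]
  rw [hrk]
  simp only [mul_inv_rev, Equiv.Perm.mul_apply, ne_eq, EmbeddingLike.apply_eq_iff_eq,
    Equiv.Perm.inv_eq_iff_eq]
  exact not_congr eq_comm

lemma Mcount_Phi' (F : Fin (n - 1) → Equiv.Perm (Fin n)) (x : Fin n)
    (hprod : (List.ofFn F).reverse.prod = finRotate n) :
    Mcount (Phi F) x = Tcount F (finRotate n x) := by
  rw [Mcount_Phi, hprod]

lemma finRotate_mk (hn : 2 ≤ n) {i : ℕ} (hi : i + 1 < n) :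
    finRotate n ⟨i, by omega⟩ = ⟨i + 1, hi⟩ := by
  obtain ⟨m, rfl⟩ : ∃ m, n = m + 1 := ⟨n - 1, by omega⟩
  ext
  rw [coe_finRotate]
  have hne : (⟨i, by omega⟩ : Fin (m + 1)) ≠ Fin.last m := by
    simp only [ne_eq, Fin.ext_iff, Fin.val_last]
    omega
  rw [if_neg hne]

lemma finRotate_last_mk (hn : 2 ≤ n) :
    finRotate n ⟨n - 1, by omega⟩ = ⟨0, by omega⟩ := by
  obtain ⟨m, rfl⟩ : ∃ m, n = m + 1 := ⟨n - 1, by omega⟩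
  have hl : (⟨m + 1 - 1, by omega⟩ : Fin (m + 1)) = Fin.last m := by
    ext; simp
  rw [hl]
  ext
  rw [coe_finRotate, if_pos rfl]

end SymTM

set_option maxHeartbeats 4000000 in
open SymTM in
/-- for `1 ≤ k ≤ n-1` and prescribed values `a j, b j`, the number of
minimal factorizations `F` with `T_j(F) = a j` and `M_j(F) = b j` for all `1 ≤ j ≤ k`
equals the number of those with `M_{j-1}(F) = a j` and `T_j(F) = b j` for all
`1 ≤ j ≤ k`, where `M_0` means `M_n` (element `i` of `{1,…,n}` is the index
`i-1 : Fin n`). -/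
theorem symmetry_TM_shift (n k : ℕ) (hn : 2 ≤ n) (hk1 : 1 ≤ k) (hk2 : k ≤ n - 1)
    (a b : ℕ → ℕ) :
    Nat.card {F : Fin (n - 1) → Equiv.Perm (Fin n) //
      IsMinFact n F ∧ ∀ j (h1 : 1 ≤ j) (h2 : j ≤ k),
        Tcount F ⟨j - 1, by omega⟩ = a j ∧ Mcount F ⟨j - 1, by omega⟩ = b j} =
    Nat.card {F : Fin (n - 1) → Equiv.Perm (Fin n) //
      IsMinFact n F ∧ ∀ j (h1 : 1 ≤ j) (h2 : j ≤ k),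
        Mcount F ⟨if j = 1 then n - 1 else j - 2, by split <;> omega⟩ = a j ∧
        Tcount F ⟨j - 1, by omega⟩ = b j} := by
  have hidx : ∀ j (h1 : 1 ≤ j) (h2 : j ≤ k),
      finRotate n (⟨if j = 1 then n - 1 else j - 2, by split <;> omega⟩ : Fin n) =
        (⟨j - 1, by omega⟩ : Fin n) := by
    intro j h1 h2
    by_cases hj : j = 1
    · subst hj
      simp only [if_pos rfl]
      exact finRotate_last_mk hn
    · simp only [if_neg hj]
      have e : finRotate n (⟨j - 2, by omega⟩ : Fin n) = (⟨j - 2 + 1, by omega⟩ : Fin n) :=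
        @finRotate_mk n hn (j - 2) (by omega)
      rw [e]
      simp only [Fin.mk.injEq]
      omega
  apply Nat.card_congr
  refine Equiv.mk (fun F => ⟨Phi F.1, ?_, ?_⟩) (fun G => ⟨Psi G.1, ?_, ?_⟩)
    (fun F => Subtype.ext (Psi_Phi F.1)) (fun G => Subtype.ext (Phi_Psi G.1))
  · obtain ⟨⟨hswap, hprod⟩, hcond⟩ := F.2
    constructor
    · intro k2
      simp only [Phi]
      exact isSwap_conj' _ _ (hswap k2.rev)
    · rw [← pp_top, pp_Phi _ _ le_rfl, Nat.sub_self, pp_zero, inv_one, one_mul, pp_top, hprod]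
  · obtain ⟨⟨hswap, hprod⟩, hcond⟩ := F.2
    intro j h1 h2
    obtain ⟨ha, hb⟩ := hcond j h1 h2
    constructor
    · rw [Mcount_Phi, hprod, hidx j h1 h2]
      exact ha
    · rw [Tcount_Phi]
      exact hb
  · obtain ⟨⟨hswap, hprod⟩, hcond⟩ := G.2
    constructor
    · intro k2
      simp only [Psi]
      have hq : (pp G.1 (n - 1 - k2.val) * (pp G.1 (n - 1))⁻¹) =
          (pp G.1 (n - 1) * (pp G.1 (n - 1 - k2.val))⁻¹)⁻¹ := by group
      rw [hq]
      exact isSwap_conj _ _ (hswap k2.rev)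
    · rw [← pp_top, pp_Psi _ _ le_rfl, Nat.sub_self, pp_zero, inv_one, mul_one, pp_top, hprod]
  · obtain ⟨⟨hswap, hprod⟩, hcond⟩ := G.2
    have hprodPsi : (List.ofFn (Psi G.1)).reverse.prod = finRotate n := by
      rw [← pp_top, pp_Psi _ _ le_rfl, Nat.sub_self, pp_zero, inv_one, mul_one, pp_top, hprod]
    intro j h1 h2
    obtain ⟨ha, hb⟩ := hcond j h1 h2
    have hPhiPsi := Phi_Psi G.1
    constructor
    · have h := Mcount_Phi' (Psi G.1)
        (⟨if j = 1 then n - 1 else j - 2, by split <;> omega⟩ : Fin n) hprodPsi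
      rw [hPhiPsi, hidx j h1 h2] at h
      rw [← h]
      exact ha
    · have h := Tcount_Phi (Psi G.1) (⟨j - 1, by omega⟩ : Fin n)
      rw [hPhiPsi] at h
      rw [← h]
      exact hb
end

section
/- Fix n ≥ 2 and 1 ≤ k ≤ n. For every tuple (a_1, b_1, …, a_k, b_k) of natural numbers, the number of minimal factorizations F ∈ 𝔐_n with T_j(F) = a_j and M_j(F) = b_j for all 1 ≤ j ≤ k equals the number of minimal factorizations F ∈ 𝔐_n with T_j(F) = b_{k+1-j} and M_j(F) = a_{k+1-j} for all 1 ≤ j ≤ k. -/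
/-! Let `g` be the reflection `x ↦ (k - 1) - x` of `ℤ/n`; it conjugates the cycle `c` to `c⁻¹`
and reverses the window `{0, …, k - 1}`. Writing `Q_m = τ_m ⋯ τ_1` for the prefix products, the
factorization `τ'_j = (Q_{j-1} g)⁻¹ τ_j⁻¹ (Q_{j-1} g)` has prefix products `Q'_m = g⁻¹ Q_m⁻¹ g`, so
it is again a minimal factorization of `c`, and `F ↦ F'` is an involution. Now `τ'_j` moves `x`
iff `τ_j` moves the current position `Q_{j-1} (g x)`, and the trajectory of `x` under `F'` moves
at step `j` iff `τ_j` moves `g x`; hence `T_x(F') = M_{g x}(F)` and `M_x(F') = T_{g x}(F)`. -/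

section Group

variable {G : Type*} [Group G] {N : ℕ}

def prefixProd (F : Fin N → G) (m : ℕ) : G :=
  ((List.ofFn F).take m).reverse.prod

@[simp]
lemma prefixProd_zero (F : Fin N → G) : prefixProd F 0 = 1 := rfl

lemma prefixProd_succ (F : Fin N → G) (j : Fin N) :
    prefixProd F (j + 1) = F j * prefixProd F j := by
  simp [prefixProd, List.take_add_one]

lemma prefixProd_length (F : Fin N → G) : prefixProd F N = (List.ofFn F).reverse.prod := by
  rw [prefixProd, List.take_of_length_le (by simp)]

def reversal (g : G) (F : Fin N → G) : Fin N → G :=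
  fun j => (prefixProd F j * g)⁻¹ * (F j)⁻¹ * (prefixProd F j * g)

lemma prefixProd_reversal (g : G) (F : Fin N → G) {m : ℕ} (hm : m ≤ N) :
    prefixProd (reversal g F) m = g⁻¹ * (prefixProd F m)⁻¹ * g := by
  induction m with
  | zero => simp
  | succ m ih =>
    rw [prefixProd_succ (reversal g F) ⟨m, hm⟩, ih (by omega), prefixProd_succ F ⟨m, hm⟩,
      reversal]
    group

lemma reversal_inv_reversal (g : G) (F : Fin N → G) : reversal g⁻¹ (reversal g F) = F := by
  funext j
  simp only [reversal, prefixProd_reversal g F j.isLt.le]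
  group

lemma reversal_involutive {g : G} (hg : g⁻¹ = g) : Function.Involutive (reversal (N := N) g) :=
  fun F => by simpa only [hg] using reversal_inv_reversal g F

end Group

section Perm

open Equiv

variable {α : Type*} {N : ℕ}

lemma Equiv.Perm.IsSwap.inv_conj [DecidableEq α] {σ : Perm α} (h : σ.IsSwap) (u : Perm α) :
    (u⁻¹ * σ⁻¹ * u).IsSwap := by
  obtain ⟨x, y, hxy, rfl⟩ := h
  refine ⟨u⁻¹ x, u⁻¹ y, u⁻¹.injective.ne hxy, ?_⟩
  rw [swap_inv, swap_apply_apply, inv_inv]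

lemma reversal_apply_ne_iff (g : Perm α) (F : Fin N → Perm α) (j : Fin N) (x : α) :
    reversal g F j x ≠ x ↔ prefixProd F j (g x) ≠ prefixProd F (j + 1) (g x) := by
  rw [prefixProd_succ, reversal]
  simp only [mul_inv_rev, Perm.mul_apply, ne_eq, Perm.inv_eq_iff_eq]

lemma prefixProd_reversal_apply_ne_iff (g : Perm α) (F : Fin N → Perm α) (j : Fin N) (x : α) :
    prefixProd (reversal g F) j x ≠ prefixProd (reversal g F) (j + 1) x ↔ F j (g x) ≠ g x := by
  rw [prefixProd_reversal g F j.isLt.le, prefixProd_reversal g F j.isLt, prefixProd_succ, ne_comm]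
  simp only [mul_inv_rev, Perm.mul_apply, ne_eq, EmbeddingLike.apply_eq_iff_eq, Perm.inv_eq_iff_eq]
  exact not_congr eq_comm

end Perm

section MinimalFactorization

variable {n : ℕ}

lemma Tcount_reversal (g : Equiv.Perm (Fin n)) (F : Fin (n - 1) → Equiv.Perm (Fin n))
    (x : Fin n) : Tcount (reversal g F) x = Mcount F (g x) := by
  unfold Tcount Mcount
  congr 1
  exact Finset.filter_congr fun j _ => reversal_apply_ne_iff g F j x

lemma Mcount_reversal (g : Equiv.Perm (Fin n)) (F : Fin (n - 1) → Equiv.Perm (Fin n))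
    (x : Fin n) : Mcount (reversal g F) x = Tcount F (g x) := by
  unfold Tcount Mcount
  congr 1
  exact Finset.filter_congr fun j _ => prefixProd_reversal_apply_ne_iff g F j x

lemma isMinFact_reversal {F : Fin (n - 1) → Equiv.Perm (Fin n)} (hF : IsMinFact n F)
    {g : Equiv.Perm (Fin n)} (hg : g⁻¹ * finRotate n * g = (finRotate n)⁻¹) :
    IsMinFact n (reversal g F) := by
  refine ⟨fun j => (hF.1 j).inv_conj _, ?_⟩
  rw [← prefixProd_length, prefixProd_reversal g F le_rfl, prefixProd_length, hF.2]
  calc g⁻¹ * (finRotate n)⁻¹ * g = (g⁻¹ * finRotate n * g)⁻¹ := by group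
    _ = finRotate n := by rw [hg, inv_inv]

lemma subLeft_conj_finRotate [NeZero n] (d : Fin n) :
    (Equiv.subLeft d)⁻¹ * finRotate n * Equiv.subLeft d = (finRotate n)⁻¹ := by
  refine Equiv.ext fun x => ?_
  simp only [Equiv.Perm.inv_def, Equiv.symm_subLeft, Equiv.Perm.mul_apply, Equiv.subLeft_apply,
    finRotate_apply, finRotate_symm_apply]
  abel

lemma subLeft_mk_sub_one [NeZero n] {d : Fin n} {j k : ℕ} (hd : (d : ℕ) = k - 1) (hj1 : 1 ≤ j)
    (hjk : j ≤ k) (hk : k ≤ n) :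
    Equiv.subLeft d ⟨j - 1, Nat.sub_one_lt_of_le hj1 (hjk.trans hk)⟩ =
      ⟨k + 1 - j - 1, by omega⟩ := by
  ext
  rw [Equiv.subLeft_apply, Fin.coe_sub_iff_le.2 (Fin.le_def.2 (by simp only; omega))]
  simp only
  omega

lemma IsMinFact.reversal_window [NeZero n] {k : ℕ} (hk : k ≤ n) {d : Fin n}
    (hd : (d : ℕ) = k - 1) {P Q : ℕ → ℕ} {F : Fin (n - 1) → Equiv.Perm (Fin n)}
    (hF : IsMinFact n F)
    (h : ∀ j (h1 : 1 ≤ j) (h2 : j ≤ k),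
      Tcount F ⟨j - 1, Nat.sub_one_lt_of_le h1 (h2.trans hk)⟩ = P j ∧
      Mcount F ⟨j - 1, Nat.sub_one_lt_of_le h1 (h2.trans hk)⟩ = Q j) :
    IsMinFact n (reversal (Equiv.subLeft d) F) ∧ ∀ j (h1 : 1 ≤ j) (h2 : j ≤ k),
      Tcount (reversal (Equiv.subLeft d) F) ⟨j - 1, Nat.sub_one_lt_of_le h1 (h2.trans hk)⟩ =
        Q (k + 1 - j) ∧
      Mcount (reversal (Equiv.subLeft d) F) ⟨j - 1, Nat.sub_one_lt_of_le h1 (h2.trans hk)⟩ =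
        P (k + 1 - j) := by
  refine ⟨isMinFact_reversal hF (subLeft_conj_finRotate d), fun j h1 h2 => ?_⟩
  rw [Tcount_reversal, Mcount_reversal, subLeft_mk_sub_one hd h1 h2 hk]
  exact (h (k + 1 - j) (by omega) (by omega)).symm

end MinimalFactorization

lemma Nat.card_subtype_eq_of_involutive {α : Type*} {p q : α → Prop} {f : α → α}
    (hf : Function.Involutive f) (hpq : ∀ x, p x → q (f x)) (hqp : ∀ x, q x → p (f x)) :
    Nat.card {x // p x} = Nat.card {x // q x} :=
  Nat.card_congr ⟨Subtype.map f hpq, Subtype.map f hqp,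
    fun x => Subtype.ext (hf x), fun x => Subtype.ext (hf x)⟩

/-- for `1 ≤ k ≤ n` and prescribed values `a j, b j`, the number of
minimal factorizations `F` with `T_j(F) = a j` and `M_j(F) = b j` for all `1 ≤ j ≤ k`
equals the number of those with `T_j(F) = b (k+1-j)` and `M_j(F) = a (k+1-j)` for
all `1 ≤ j ≤ k` (element `i` of `{1,…,n}` is the index `i-1 : Fin n`). -/
theorem symmetry_TM_reversal (n k : ℕ) (hk1 : 1 ≤ k) (hk2 : k ≤ n)
    (a b : ℕ → ℕ) :
    Nat.card {F : Fin (n - 1) → Equiv.Perm (Fin n) //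
      IsMinFact n F ∧ ∀ j (h1 : 1 ≤ j) (h2 : j ≤ k),
        Tcount F ⟨j - 1, by omega⟩ = a j ∧ Mcount F ⟨j - 1, by omega⟩ = b j} =
    Nat.card {F : Fin (n - 1) → Equiv.Perm (Fin n) //
      IsMinFact n F ∧ ∀ j (h1 : 1 ≤ j) (h2 : j ≤ k),
        Tcount F ⟨j - 1, by omega⟩ = b (k + 1 - j) ∧
        Mcount F ⟨j - 1, by omega⟩ = a (k + 1 - j)} := by
  have : NeZero n := ⟨by omega⟩
  let d : Fin n := ⟨k - 1, by omega⟩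
  refine Nat.card_subtype_eq_of_involutive (reversal_involutive (Equiv.symm_subLeft d))
    (fun F hF => hF.1.reversal_window hk2 (d := d) rfl hF.2) (fun F hF => ?_)
  obtain ⟨hF', hab⟩ := hF.1.reversal_window hk2 (d := d) rfl hF.2
  refine ⟨hF', fun j h1 h2 => ?_⟩
  simpa only [show k + 1 - (k + 1 - j) = j by omega] using hab j h1 h2
end

section
/- For every n ≥ 2, every 1 ≤ j ≤ n and all natural numbers a, b, the number of minimal factorizations F ∈ 𝔐_n with T_1(F) = a and M_j(F) = b equals the number of minimal factorizations F ∈ 𝔐_n with T_1(F) = a and M_{n+1-j}(F) = b. -/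
/-! Write `ν` for the reflection `x ↦ -x` of `ℤ/n` (indices `0, …, n-1`); it fixes the element
`1` and conjugates the cycle `c` into `c⁻¹`. Reading a factorization of `c` into transpositions
backwards and conjugating every factor by `ν` is an involution on minimal factorizations: the
reversed product is `c⁻¹`, which `ν` turns back into `c`. The transpositions moving `1` correspond
bijectively, and the trajectory of `x` in the new factorization is the `ν`-image of the reversed
trajectory of `c⁻¹(ν x) = rev x` in the old one, so `M_x` is exchanged with `M_{n+1-x}`. -/

open Equiv

namespace List

variable {G : Type*} [Group G]

theorem prod_reverse_of_forall_inv_eq_self {l : List G} (hl : ∀ g ∈ l, g⁻¹ = g) :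
    l.reverse.prod = l.prod⁻¹ := by
  rw [prod_reverse_noncomm, map_congr_left hl, map_id']

theorem prod_drop_of_reverse_prod_eq {l : List G} {c : G} (hl : ∀ g ∈ l, g⁻¹ = g)
    (hc : l.reverse.prod = c) (d : ℕ) :
    (l.drop d).prod = (l.take d).reverse.prod * c⁻¹ := by
  have hsplit : (l.drop d).reverse.prod * (l.take d).reverse.prod = c := by
    rw [← prod_append, ← reverse_append, take_append_drop, hc]
  rw [← inv_inv (l.drop d).prod, ← prod_reverse_of_forall_inv_eq_self
    fun g hg => hl g (mem_of_mem_drop hg), ← hsplit]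
  group

end List

theorem Equiv.Perm.IsSwap.conj {α : Type*} [DecidableEq α] {f : Perm α} (hf : f.IsSwap)
    (σ : Perm α) : (σ * f * σ⁻¹).IsSwap := by
  obtain ⟨x, y, hxy, rfl⟩ := hf
  exact ⟨σ x, σ y, σ.injective.ne hxy, (swap_apply_apply σ x y).symm⟩

namespace MinFact

variable {n : ℕ}

def revConj (σ : Perm (Fin n)) (F : Fin (n - 1) → Perm (Fin n)) : Fin (n - 1) → Perm (Fin n) :=
  fun k => σ * F k.rev * σ⁻¹

variable {σ : Perm (Fin n)} {F : Fin (n - 1) → Perm (Fin n)}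

theorem revConj_involutive (hσ : σ * σ = 1) : Function.Involutive (revConj σ) := by
  intro F
  funext k
  simp only [revConj, Fin.rev_rev]
  rw [show σ * (σ * F k * σ⁻¹) * σ⁻¹ = σ * σ * F k * (σ * σ)⁻¹ by group, hσ]
  simp

theorem ofFn_revConj :
    List.ofFn (revConj σ F) = (List.ofFn F).reverse.map (MulAut.conj σ) := by
  apply List.ext_getElem (by simp)
  intro i h _
  simp only [List.getElem_ofFn, List.getElem_map, List.getElem_reverse, List.length_ofFn,
    MulAut.conj_apply]
  simp only [List.length_ofFn] at h
  exact congrArg (fun k => σ * F k * σ⁻¹) (Fin.ext (by simp only [Fin.val_rev]; omega))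

theorem inv_eq_self_of_mem_ofFn (hs : ∀ k, (F k).IsSwap) :
    ∀ g ∈ List.ofFn F, g⁻¹ = g := by
  intro g hg
  obtain ⟨k, rfl⟩ := List.mem_ofFn.1 hg
  obtain ⟨x, y, -, hk⟩ := hs k
  rw [hk, swap_inv]

theorem prod_take_ofFn_revConj (hs : ∀ k, (F k).IsSwap) {c : Perm (Fin n)}
    (hc : (List.ofFn F).reverse.prod = c) (k : ℕ) :
    ((List.ofFn (revConj σ F)).take k).reverse.prod =
      MulAut.conj σ (((List.ofFn F).take (n - 1 - k)).reverse.prod * c⁻¹) := by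
  rw [ofFn_revConj, ← List.map_take, ← List.map_reverse, ← map_list_prod, List.take_reverse,
    List.reverse_reverse, List.length_ofFn,
    List.prod_drop_of_reverse_prod_eq (inv_eq_self_of_mem_ofFn hs) hc]

theorem isMinFact_revConj (hF : IsMinFact n F) (hσ : σ * (finRotate n)⁻¹ * σ⁻¹ = finRotate n) :
    IsMinFact n (revConj σ F) := by
  refine ⟨fun k => (hF.1 k.rev).conj σ, ?_⟩
  have h := prod_take_ofFn_revConj (σ := σ) hF.1 hF.2 (n - 1)
  rwa [List.take_of_length_le (by simp), Nat.sub_self, List.take_zero, List.reverse_nil,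
    List.prod_nil, one_mul, MulAut.conj_apply, hσ] at h

theorem isMinFact_revConj_iff (hσ : σ * σ = 1) (hc : σ * (finRotate n)⁻¹ * σ⁻¹ = finRotate n) :
    IsMinFact n (revConj σ F) ↔ IsMinFact n F :=
  ⟨fun h => revConj_involutive hσ F ▸ isMinFact_revConj h hc, fun h => isMinFact_revConj h hc⟩

theorem tcount_revConj (x : Fin n) : Tcount (revConj σ F) x = Tcount F (σ⁻¹ x) := by
  refine Finset.card_equiv Fin.revPerm fun k => ?_
  simp only [Finset.mem_filter, Finset.mem_univ, true_and, Fin.revPerm_apply]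
  simp only [revConj, Perm.mul_apply, ne_eq]
  exact not_congr Perm.eq_inv_iff_eq.symm

theorem mcount_revConj (hF : IsMinFact n F) (x : Fin n) :
    Mcount (revConj σ F) x = Mcount F ((finRotate n)⁻¹ (σ⁻¹ x)) := by
  refine Finset.card_equiv Fin.revPerm fun k => ?_
  have hk : n - 1 - (k.val + 1) = k.rev := by simp only [Fin.val_rev]
  have hk' : n - 1 - k.val = k.rev + 1 := by simp only [Fin.val_rev]; omega
  simp only [Finset.mem_filter, Finset.mem_univ, true_and, Fin.revPerm_apply,
    prod_take_ofFn_revConj hF.1 hF.2, hk, hk', MulAut.conj_apply, Perm.mul_apply, ne_eq,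
    EmbeddingLike.apply_eq_iff_eq]
  exact not_congr eq_comm

end MinFact

section

variable {n : ℕ}

theorem finRotate_inv_apply_neg (x : Fin n) : (finRotate n)⁻¹ (-x) = x.rev := by
  obtain ⟨m, rfl⟩ := Nat.exists_eq_add_one_of_ne_zero x.pos.ne'
  rw [Perm.inv_def, finRotate_symm_apply, ← Fin.last_sub, ← Fin.neg_last]
  abel

theorem Equiv.neg_mul_finRotate_inv_mul_neg :
    Equiv.neg (Fin n) * (finRotate n)⁻¹ * (Equiv.neg (Fin n))⁻¹ = finRotate n := by
  ext x
  rcases n with _ | m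
  · exact x.elim0
  simp [Perm.mul_apply, add_comm]

end

/-- for `1 ≤ j ≤ n`, the number of minimal factorizations with
`T_1 = a` and `M_j = b` equals the number of minimal factorizations with `T_1 = a`
and `M_{n+1-j} = b` (element `i` of `{1,…,n}` is the index `i-1 : Fin n`, so the
element `n+1-j` is the index `n-j`). -/
theorem horizontal_symmetry (n j : ℕ) (hj1 : 1 ≤ j) (hj2 : j ≤ n)
    (a b : ℕ) :
    Nat.card {F : Fin (n - 1) → Equiv.Perm (Fin n) //
      IsMinFact n F ∧ Tcount F ⟨0, by omega⟩ = a ∧ Mcount F ⟨j - 1, by omega⟩ = b} =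
    Nat.card {F : Fin (n - 1) → Equiv.Perm (Fin n) //
      IsMinFact n F ∧ Tcount F ⟨0, by omega⟩ = a ∧ Mcount F ⟨n - j, by omega⟩ = b} := by
  have hneg : Equiv.neg (Fin n) * Equiv.neg (Fin n) = 1 := by ext; simp [Perm.mul_apply]
  have hΦ := MinFact.revConj_involutive hneg
  refine Nat.card_congr (Equiv.subtypeEquiv hΦ.toPerm fun F => ?_)
  rw [Function.Involutive.coe_toPerm,
    MinFact.isMinFact_revConj_iff hneg Equiv.neg_mul_finRotate_inv_mul_neg]
  refine and_congr_right fun hF => ?_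
  rw [MinFact.tcount_revConj, MinFact.mcount_revConj hF]
  have h0 : (Equiv.neg (Fin n))⁻¹ ⟨0, by omega⟩ = ⟨0, by omega⟩ :=
    Fin.ext (by simp [Fin.neg_def])
  have hj : (finRotate n)⁻¹ ((Equiv.neg (Fin n))⁻¹ ⟨n - j, by omega⟩) = ⟨j - 1, by omega⟩ :=
    (finRotate_inv_apply_neg _).trans (Fin.ext (by simp only [Fin.val_rev]; omega))
  rw [h0, hj]
end
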